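/- arXiv:1802.06264 — 6 statements merged into one kernel-verified Lean document; each statement's English description precedes it below -/
import Mathlib

section
/- Let X be a complex Hilbert space, let A, B : X → X be compact self-adjoint bounded linear operators, and let r ∈ ℕ. Then the following are equivalent: (a) B − A has at most r negative eigenvalues counted with multiplicity; (b) there exists a subspace V ⊆ X with dim V ≤ r such that Re⟨(B − A)v, v⟩ ≥ 0 for all v in the orthogonal complement V⊥ of V. -/
/-!
Write `T = B - A` and let `N` be the span of the eigenspaces of `T` for negative eigenvalues.
On `N` the form `re ⟪T w, w⟫` is negative definite, since eigenspaces of distinct eigenvalues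
are orthogonal; so if `re ⟪T v, v⟫ ≥ 0` on `Vᗮ`, then `N ∩ Vᗮ = 0`, and the orthogonal
projection onto `V` embeds `N` into `V`. Conversely `V = N` works: `Nᗮ` is `T`-invariant, and
the restriction of `T` to it is compact, self-adjoint and has no negative eigenvalue. Since every
nonzero spectral value of a compact operator is an eigenvalue, this restriction has nonnegative
spectrum and is therefore a positive operator.
-/

open scoped InnerProductSpace

/-- For a (compact self-adjoint) operator `T` on a complex Hilbert space, `T` has at most `r`
negative eigenvalues counted with multiplicity: the span of the eigenspaces of `T` associated
with negative eigenvalues has dimension at most `r`. -/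
def HasAtMostNegEigenvalues {X : Type*} [NormedAddCommGroup X] [InnerProductSpace ℂ X]
    (T : X →L[ℂ] X) (r : ℕ) : Prop :=
  Module.rank ℂ
    ↥(⨆ μ : ℝ, ⨆ _ : μ < 0, Module.End.eigenspace (T : X →ₗ[ℂ] X) (μ : ℂ)) ≤ r

open Module.End

theorem Submodule.exists_mem_orthogonal_ne_zero_of_rank_lt {𝕜 E : Type*} [RCLike 𝕜]
    [NormedAddCommGroup E] [InnerProductSpace 𝕜 E] {V N : Submodule 𝕜 E}
    [V.HasOrthogonalProjection] (h : Module.rank 𝕜 V < Module.rank 𝕜 N) :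
    ∃ w ∈ N, w ∈ Vᗮ ∧ w ≠ 0 := by
  set f : N →ₗ[𝕜] V := V.orthogonalProjectionOnto.toLinearMap ∘ₗ N.subtype
  have hf : ¬ Function.Injective f := fun hinj => (f.rank_le_of_injective hinj).not_gt h
  rw [← LinearMap.ker_eq_bot] at hf
  obtain ⟨w, hwf, hw0⟩ := (Submodule.ne_bot_iff _).mp hf
  exact ⟨w, w.2, V.orthogonalProjectionOnto_eq_zero_iff.mp hwf, by simpa using hw0⟩

theorem IsCompactOperator.isPositive_of_not_hasEigenvalue_neg {H : Type*} [NormedAddCommGroup H]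
    [InnerProductSpace ℂ H] [CompleteSpace H] {S : H →L[ℂ] H} (hS : IsCompactOperator S)
    (hSa : IsSelfAdjoint S) (h : ∀ μ : ℝ, μ < 0 → ¬ HasEigenvalue (S : Module.End ℂ H) μ) :
    S.IsPositive := by
  rw [← ContinuousLinearMap.nonneg_iff_isPositive,
    StarOrderedRing.nonneg_iff_spectrum_nonneg (R := ℝ) S hSa]
  intro μ hμ
  by_contra! hneg
  refine h μ hneg ((hS.hasEigenvalue_iff_mem_spectrum (by exact_mod_cast hneg.ne)).mpr ?_)
  exact spectrum.algebraMap_mem ℂ hμ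

section NegEigenspan

variable {X : Type*} [NormedAddCommGroup X] [InnerProductSpace ℂ X]

def negEigenspan (T : Module.End ℂ X) : Submodule ℂ X :=
  ⨆ μ : ℝ, ⨆ _ : μ < 0, eigenspace T (μ : ℂ)

theorem negEigenspan_mem_invtSubmodule (T : Module.End ℂ X) :
    negEigenspan T ∈ T.invtSubmodule := by
  rw [mem_invtSubmodule_iff_map_le, negEigenspan, Submodule.map_iSup]
  refine iSup_mono fun μ => ?_
  rw [Submodule.map_iSup]
  exact iSup_mono fun _ => (mem_invtSubmodule_iff_map_le T).mp (eigenspace_mem_invtSubmodule T _)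

theorem re_inner_neg_of_mem_negEigenspan {T : Module.End ℂ X} (hT : T.IsSymmetric) {w : X}
    (hw : w ∈ negEigenspan T) (hw0 : w ≠ 0) : (⟪T w, w⟫_ℂ).re < 0 := by
  rw [negEigenspan, iSup_subtype', Submodule.mem_iSup_iff_exists_finsupp] at hw
  obtain ⟨f, hf, rfl⟩ := hw
  have horth : OrthogonalFamily ℂ (fun μ : {μ : ℝ // μ < 0} => eigenspace T (μ : ℂ))
      fun μ => (eigenspace T (μ : ℂ)).subtypeₗᵢ :=
    hT.orthogonalFamily_eigenspaces.comp fun μ ν h => Subtype.ext (Complex.ofReal_injective h)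
  have hTf : ∀ μ, T (f μ) = ((μ : ℝ) : ℂ) • f μ := fun μ => mem_eigenspace_iff.mp (hf μ)
  have key : ⟪T (f.sum fun _ x => x), f.sum fun _ x => x⟫_ℂ
      = ∑ μ ∈ f.support, ((μ : ℝ) * ‖f μ‖ ^ 2 : ℝ) := by
    have := horth.inner_sum (fun μ => ⟨T (f μ), hTf μ ▸ Submodule.smul_mem _ _ (hf μ)⟩)
      (fun μ => ⟨f μ, hf μ⟩) f.support
    simp only [Submodule.coe_subtypeₗᵢ, Submodule.subtype_apply, Submodule.coe_inner] at this
    rw [Finsupp.sum, map_sum, this, Complex.ofReal_sum]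
    refine Finset.sum_congr rfl fun μ _ => ?_
    rw [hTf, inner_smul_left, inner_self_eq_norm_sq_to_K, Complex.conj_ofReal]
    simp
  rw [key, Complex.ofReal_re]
  have hsupp : f.support.Nonempty := Finsupp.support_nonempty_iff.mpr (by rintro rfl; simp at hw0)
  exact Finset.sum_neg (fun μ hμ => mul_neg_of_neg_of_pos μ.2
    (pow_pos (norm_pos_iff.mpr (Finsupp.mem_support_iff.mp hμ)) 2)) hsupp

theorem re_inner_nonneg_of_mem_orthogonal_negEigenspan [CompleteSpace X] {T : X →L[ℂ] X}
    (hT : IsCompactOperator T) (hTa : IsSelfAdjoint T) {v : X}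
    (hv : v ∈ (negEigenspan (T : Module.End ℂ X))ᗮ) :
    0 ≤ (⟪T v, v⟫_ℂ).re := by
  set N := negEigenspan (T : Module.End ℂ X)
  have hK : ∀ x ∈ Nᗮ, T x ∈ Nᗮ :=
    hTa.isSymmetric.orthogonalComplement_mem_invtSubmodule (negEigenspan_mem_invtSubmodule _)
  have hS : (T.restrict hK).IsPositive := by
    refine (hT.restrict' hK).isPositive_of_not_hasEigenvalue_neg
      ((ContinuousLinearMap.isSelfAdjoint_iff_isSymmetric).mpr
        (hTa.isSymmetric.restrict_invariant hK)) fun μ hμ hμT => ?_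
    obtain ⟨x, hx, hx0⟩ := hμT.exists_hasEigenvector
    have hxN : (x : X) ∈ N :=
      Submodule.mem_iSup_of_mem μ (Submodule.mem_iSup_of_mem hμ (by
        rw [mem_eigenspace_iff] at hx ⊢
        exact congrArg Subtype.val hx))
    exact hx0 (Subtype.ext (Submodule.disjoint_def.mp N.orthogonal_disjoint _ hxN x.2))
  exact hS.re_inner_nonneg_left ⟨v, hv⟩

end NegEigenspan

theorem statement0 {X : Type*} [NormedAddCommGroup X] [InnerProductSpace ℂ X]
    [CompleteSpace X] (A B : X →L[ℂ] X)
    (hAcomp : IsCompactOperator A) (hBcomp : IsCompactOperator B)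
    (hAsa : IsSelfAdjoint A) (hBsa : IsSelfAdjoint B) (r : ℕ) :
    HasAtMostNegEigenvalues (B - A) r ↔
      ∃ V : Submodule ℂ X, Module.rank ℂ V ≤ r ∧
        ∀ v ∈ Vᗮ, 0 ≤ (⟪(B - A) v, v⟫_ℂ).re := by
  have hT : IsCompactOperator (B - A) := hBcomp.sub hAcomp
  have hTa : IsSelfAdjoint (B - A) := hBsa.sub hAsa
  constructor
  · exact fun hN => ⟨_, hN, fun v => re_inner_nonneg_of_mem_orthogonal_negEigenspan hT hTa⟩
  · rintro ⟨V, hV, hVpos⟩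
    by_contra hN
    have : FiniteDimensional ℂ V :=
      Module.rank_lt_aleph0_iff.mp (hV.trans_lt (Cardinal.natCast_lt_aleph0))
    obtain ⟨w, hwN, hwV, hw0⟩ :=
      Submodule.exists_mem_orthogonal_ne_zero_of_rank_lt (hV.trans_lt (not_le.mp hN))
    exact (hVpos w hwV).not_gt (re_inner_neg_of_mem_negEigenspan hTa.isSymmetric hwN hw0)
end

section
/- Let H be a complex Hilbert space, let T : H → H be a compact self-adjoint bounded linear operator, and let c > 0. Then the subspace W ⊆ H spanned by all eigenspaces of T associated with eigenvalues larger than c is finite-dimensional, and Re⟨Tw, w⟩ ≤ c‖w‖² for all w in the orthogonal complement W⊥ of W. -/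
/-!
Eigenspaces of a self-adjoint operator for distinct eigenvalues are orthogonal, so on the span `W`
of those with eigenvalue `μ > c` we have `c * ‖y‖ ≤ ‖T y‖`. A compact operator that is bounded
below on `W` maps its unit ball onto a totally bounded set and is a uniform embedding there, so the
unit ball of `W` is totally bounded and `W` is finite-dimensional by Riesz's theorem.

`Wᗮ` is `T`-invariant, and the restriction of `T` to it is compact, self-adjoint, and has no
eigenvalue above `c`. By the Fredholm alternative every nonzero point of its spectrum is an
eigenvalue, so its spectrum lies in `(-∞, c]`, i.e. the restriction is `≤ c` in the Loewner order.
-/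

open scoped InnerProductSpace NNReal
open Module End

theorem FiniteDimensional.of_isCompactOperator_of_antilipschitz {𝕜 E F : Type*}
    [NontriviallyNormedField 𝕜] [CompleteSpace 𝕜]
    [NormedAddCommGroup E] [NormedSpace 𝕜 E] [NormedAddCommGroup F] [NormedSpace 𝕜 F]
    {f : E →L[𝕜] F} (hf : IsCompactOperator f) {K : ℝ≥0} (hK : AntilipschitzWith K f) :
    FiniteDimensional 𝕜 E := by
  refine .of_totallyBounded_nhds_zero 𝕜 (Metric.closedBall_mem_nhds (0 : E) one_pos) ?_
  have hball : TotallyBounded (f '' Metric.closedBall 0 1) :=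
    (hf.isCompact_closure_image_closedBall 1).totallyBounded.subset subset_closure
  exact (totallyBounded_preimage (hK.isUniformInducing f.uniformContinuous) hball).subset
    (Set.subset_preimage_image _ _)

theorem IsCompactOperator.finiteDimensional_of_mul_norm_le {𝕜 E F : Type*}
    [NontriviallyNormedField 𝕜] [CompleteSpace 𝕜]
    [NormedAddCommGroup E] [NormedSpace 𝕜 E] [NormedAddCommGroup F] [NormedSpace 𝕜 F]
    {T : E →L[𝕜] F} (hT : IsCompactOperator T) {W : Submodule 𝕜 E} {c : ℝ} (hc : 0 < c)
    (hW : ∀ y ∈ W, c * ‖y‖ ≤ ‖T y‖) : FiniteDimensional 𝕜 W := by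
  refine .of_isCompactOperator_of_antilipschitz (f := T ∘L W.subtypeL) (hT.comp_clm W.subtypeL)
    (K := ⟨c⁻¹, inv_nonneg.mpr hc.le⟩) (ContinuousLinearMap.antilipschitz_of_bound _ fun y => ?_)
  change ‖(y : E)‖ ≤ c⁻¹ * ‖T y‖
  rw [← div_eq_inv_mul, le_div_iff₀' hc]
  exact hW y y.2

theorem Module.End.iSup_mem_invtSubmodule {R M : Type*} {ι : Sort*} [Semiring R]
    [AddCommMonoid M] [Module R M] (f : End R M) {p : ι → Submodule R M}
    (hp : ∀ i, p i ∈ f.invtSubmodule) : ⨆ i, p i ∈ f.invtSubmodule :=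
  (mem_invtSubmodule f).mpr <| iSup_le fun i => (hp i).trans (Submodule.comap_mono (le_iSup p i))

theorem LinearMap.IsSymmetric.mul_norm_le_norm_apply_of_mem_iSup_eigenspace {𝕜 E : Type*}
    [RCLike 𝕜] [NormedAddCommGroup E] [InnerProductSpace 𝕜 E]
    {T : E →ₗ[𝕜] E} (hT : T.IsSymmetric) {c : ℝ} (hc : 0 ≤ c) {y : E}
    (hy : y ∈ ⨆ μ : ℝ, ⨆ _ : c < μ, eigenspace T (μ : 𝕜)) : c * ‖y‖ ≤ ‖T y‖ := by
  rw [iSup_subtype', Submodule.mem_iSup_iff_exists_finsupp] at hy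
  obtain ⟨F, hF, rfl⟩ := hy
  have horth : OrthogonalFamily 𝕜 (fun μ : {μ : ℝ // c < μ} => eigenspace T (μ : 𝕜))
      fun μ => (eigenspace T (μ : 𝕜)).subtypeₗᵢ :=
    hT.orthogonalFamily_eigenspaces.comp fun μ ν h => Subtype.ext (RCLike.ofReal_injective h)
  have hTF : T (F.sum fun _ x => x) = ∑ μ ∈ F.support, ((μ : ℝ) : 𝕜) • F μ := by
    simp only [Finsupp.sum, map_sum]
    exact Finset.sum_congr rfl fun μ _ => mem_eigenspace_iff.mp (hF μ)
  have hnorm := horth.norm_sum (fun μ => ⟨F μ, hF μ⟩) F.support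
  have hTnorm := horth.norm_sum
    (fun μ => ⟨((μ : ℝ) : 𝕜) • F μ, Submodule.smul_mem _ _ (hF μ)⟩) F.support
  simp only [Submodule.coe_subtypeₗᵢ, Submodule.subtype_apply, Submodule.coe_norm] at hnorm hTnorm
  rw [← pow_le_pow_iff_left₀ (by positivity) (norm_nonneg _) two_ne_zero, hTF, hTnorm, mul_pow,
    Finsupp.sum, hnorm, Finset.mul_sum]
  refine Finset.sum_le_sum fun μ _ => ?_
  rw [norm_smul, mul_pow, RCLike.norm_ofReal]
  gcongr
  exact (abs_of_pos (hc.trans_lt μ.2)).symm ▸ μ.2.le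

section Hilbert

variable {E : Type*} [NormedAddCommGroup E] [InnerProductSpace ℂ E] [CompleteSpace E]

theorem IsCompactOperator.re_inner_apply_self_le_of_forall_not_hasEigenvalue
    {S : E →L[ℂ] E} (hS : IsCompactOperator S) (hSa : IsSelfAdjoint S) {c : ℝ} (hc : 0 ≤ c)
    (h : ∀ μ : ℝ, c < μ → ¬ HasEigenvalue (S : End ℂ E) μ) (x : E) :
    (⟪S x, x⟫_ℂ).re ≤ c * ‖x‖ ^ 2 := by
  have hspec : ∀ μ ∈ spectrum ℝ S, μ ≤ c := fun μ hμ => not_lt.mp fun hcμ =>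
    h μ hcμ <| (hS.hasEigenvalue_iff_mem_spectrum (by exact_mod_cast (hc.trans_lt hcμ).ne')).mpr
      (spectrum.algebraMap_mem ℂ hμ)
  have hpos := ((ContinuousLinearMap.le_def _ _).mp
    (le_algebraMap_of_spectrum_le hspec hSa)).re_inner_nonneg_left x
  rw [sub_apply, inner_sub_left, map_sub, sub_nonneg, Algebra.algebraMap_eq_smul_one,
    smul_apply, one_apply_eq_self, RCLike.real_smul_eq_coe_smul (K := ℂ), inner_smul_real_left,
    RCLike.smul_re, inner_self_eq_norm_sq] at hpos
  exact hpos

theorem IsCompactOperator.re_inner_apply_self_le_of_mem_orthogonal_iSup_eigenspace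
    {T : E →L[ℂ] E} (hT : IsCompactOperator T) (hTa : IsSelfAdjoint T) {c : ℝ} (hc : 0 ≤ c)
    {w : E} (hw : w ∈ (⨆ μ : ℝ, ⨆ _ : c < μ, eigenspace (T : End ℂ E) (μ : ℂ))ᗮ) :
    (⟪T w, w⟫_ℂ).re ≤ c * ‖w‖ ^ 2 := by
  set W := ⨆ μ : ℝ, ⨆ _ : c < μ, eigenspace (T : End ℂ E) (μ : ℂ)
  have hinv : ∀ v ∈ Wᗮ, T v ∈ Wᗮ := by
    refine ContinuousLinearMap.orthogonal_mem_invtSubmodule ?_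
    rw [hTa.adjoint_eq]
    exact iSup_mem_invtSubmodule _ fun μ => iSup_mem_invtSubmodule _ fun _ =>
      eigenspace_mem_invtSubmodule _ _
  have hS : IsSelfAdjoint (T.restrict hinv) :=
    ContinuousLinearMap.isSelfAdjoint_iff_isSymmetric.mpr
      (hTa.isSymmetric.restrict_invariant hinv)
  have hSeig : ∀ μ : ℝ, c < μ → ¬ HasEigenvalue ((T.restrict hinv : Wᗮ →L[ℂ] Wᗮ) : End ℂ Wᗮ) μ := by
    intro μ hμ
    rw [hasEigenvalue_iff, not_not]
    refine eigenspace_restrict_eq_bot hinv ?_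
    exact ((Submodule.isOrtho_orthogonal_right W).mono_left (le_iSup₂_of_le μ hμ le_rfl)).disjoint
  exact (hT.restrict' hinv).re_inner_apply_self_le_of_forall_not_hasEigenvalue hS hc hSeig ⟨w, hw⟩

end Hilbert

theorem statement2 {H : Type*} [NormedAddCommGroup H] [InnerProductSpace ℂ H]
    [CompleteSpace H] (T : H →L[ℂ] H)
    (hTcomp : IsCompactOperator T) (hTsa : IsSelfAdjoint T)
    (c : ℝ) (hc : 0 < c) :
    FiniteDimensional ℂ
      ↥(⨆ μ : ℝ, ⨆ _ : c < μ, Module.End.eigenspace (T : H →ₗ[ℂ] H) (μ : ℂ)) ∧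
    ∀ w ∈ (⨆ μ : ℝ, ⨆ _ : c < μ, Module.End.eigenspace (T : H →ₗ[ℂ] H) (μ : ℂ))ᗮ,
      (⟪T w, w⟫_ℂ).re ≤ c * ‖w‖ ^ 2 :=
  ⟨hTcomp.finiteDimensional_of_mul_norm_le hc fun _ hy =>
      hTsa.isSymmetric.mul_norm_le_norm_apply_of_mem_iSup_eigenspace hc.le hy,
    fun _ hw => hTcomp.re_inner_apply_self_le_of_mem_orthogonal_iSup_eigenspace hTsa hc.le hw⟩
end

section
/- Let X and H be complex Hilbert spaces, let T : H → H be a compact self-adjoint bounded linear operator, and let S : X → H be a bounded linear operator. Then there exists a finite-dimensional subspace V ⊆ X such that ‖Sg‖² − Re⟨T(Sg), Sg⟩ ≥ 0 for all g in the orthogonal complement V⊥ of V. -/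
/-!
The quadratic form `x ↦ re ⟪T x, x⟫` of a compact operator is at most `ε ‖x‖²` on the orthogonal
complement of some finite-dimensional subspace `W`: otherwise one builds an orthonormal sequence
on which it stays above `ε`, whereas compactness gives a subsequence along which `T eₙ` converges
and Bessel's inequality then forces `⟪T eₙ, eₙ⟫ → 0`. Then `V = S† W` is finite-dimensional
and `S (Vᗮ) ⊆ Wᗮ`.
-/

open Filter Topology RCLike

open scoped InnerProductSpace

section InnerProductSpace

variable {𝕜 E : Type*} [RCLike 𝕜] [NormedAddCommGroup E] [InnerProductSpace 𝕜 E]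

namespace Orthonormal

theorem tendsto_inner_right_zero {e : ℕ → E} (he : Orthonormal 𝕜 e) (x : E) :
    Tendsto (fun n => ⟪x, e n⟫_𝕜) atTop (𝓝 0) := by
  rw [tendsto_zero_iff_norm_tendsto_zero]
  simpa [norm_inner_symm x] using (he.inner_products_summable (x := x)).tendsto_atTop_zero.sqrt

theorem tendsto_inner_zero_of_tendsto {e : ℕ → E} (he : Orthonormal 𝕜 e) {u : ℕ → E} {y : E}
    (hu : Tendsto u atTop (𝓝 y)) : Tendsto (fun n => ⟪u n, e n⟫_𝕜) atTop (𝓝 0) := by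
  have hsub : Tendsto (fun n => ⟪u n - y, e n⟫_𝕜) atTop (𝓝 0) :=
    squeeze_zero_norm (fun n => by simpa [he.1 n] using norm_inner_le_norm (𝕜 := 𝕜) (u n - y) (e n))
      (tendsto_iff_norm_sub_tendsto_zero.mp hu)
  simpa [inner_sub_left] using hsub.add (he.tendsto_inner_right_zero y)

end Orthonormal

theorem exists_orthonormal_forall_of_forall_finset {P : E → Prop}
    (h : ∀ s : Finset E, ∃ x ∈ (Submodule.span 𝕜 (s : Set E))ᗮ, ‖x‖ = 1 ∧ P x) :
    ∃ e : ℕ → E, Orthonormal 𝕜 e ∧ ∀ n, P (e n) := by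
  classical
  choose F hF_orth hF_norm hFP using h
  let s : ℕ → Finset E := fun n => Nat.rec ∅ (fun _ t => insert (F t) t) n
  have hs_mono : Monotone s := monotone_nat_of_le_succ fun n => Finset.subset_insert _ _
  have hlt : ∀ {m n}, m < n → ⟪F (s m), F (s n)⟫_𝕜 = 0 := fun hmn =>
    hF_orth _ _ (Submodule.subset_span (hs_mono hmn (Finset.mem_insert_self _ _)))
  refine ⟨fun n => F (s n), ⟨fun n => hF_norm _, fun m n hmn => ?_⟩, fun n => hFP _⟩
  rcases hmn.lt_or_gt with h | h
  · exact hlt h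
  · exact inner_eq_zero_symm.mp (hlt h)

namespace IsCompactOperator

variable {T : E →L[𝕜] E}

theorem exists_subseq_tendsto_inner_self_zero (hT : IsCompactOperator T) {e : ℕ → E}
    (he : Orthonormal 𝕜 e) :
    ∃ φ : ℕ → ℕ, StrictMono φ ∧ Tendsto (fun k => ⟪T (e (φ k)), e (φ k)⟫_𝕜) atTop (𝓝 0) := by
  have hbdd : Bornology.IsBounded (Set.range e) :=
    isBounded_iff_forall_norm_le.mpr ⟨1, by rintro _ ⟨n, rfl⟩; exact (he.1 n).le⟩
  obtain ⟨K, hK, hTK⟩ := hT.image_subset_compact_of_bounded hbdd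
  obtain ⟨y, -, φ, hφ, hy⟩ := hK.tendsto_subseq fun n => hTK ⟨e n, ⟨n, rfl⟩, rfl⟩
  exact ⟨φ, hφ, (he.comp φ hφ.injective).tendsto_inner_zero_of_tendsto hy⟩

theorem exists_finiteDimensional_reApplyInnerSelf_le (hT : IsCompactOperator T) {ε : ℝ}
    (hε : 0 < ε) :
    ∃ W : Submodule 𝕜 E, FiniteDimensional 𝕜 W ∧
      ∀ x ∈ Wᗮ, T.reApplyInnerSelf x ≤ ε * ‖x‖ ^ 2 := by
  by_contra! hc
  obtain ⟨e, he, hεe⟩ : ∃ e : ℕ → E, Orthonormal 𝕜 e ∧ ∀ n, ε < T.reApplyInnerSelf (e n) := by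
    refine exists_orthonormal_forall_of_forall_finset (P := (ε < T.reApplyInnerSelf ·)) fun s => ?_
    obtain ⟨x, hx, hεx⟩ := hc _ (FiniteDimensional.span_finset 𝕜 s)
    have hx0 : 0 < ‖x‖ := norm_pos_iff.mpr (by rintro rfl; simp [T.reApplyInnerSelf_apply] at hεx)
    refine ⟨((‖x‖⁻¹ : ℝ) : 𝕜) • x, Submodule.smul_mem _ _ hx, by simp [norm_smul, hx0.ne'], ?_⟩
    rw [T.reApplyInnerSelf_smul, norm_ofReal, abs_inv, abs_norm, inv_pow,
      ← div_eq_inv_mul, lt_div_iff₀ (by positivity)]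
    exact hεx
  obtain ⟨φ, -, hφ⟩ := hT.exists_subseq_tendsto_inner_self_zero he
  have hre : Tendsto (fun k => T.reApplyInnerSelf (e (φ k))) atTop (𝓝 0) := by
    simpa [Function.comp_def, T.reApplyInnerSelf_apply] using (continuous_re.tendsto 0).comp hφ
  exact hε.not_ge (ge_of_tendsto' hre fun k => (hεe (φ k)).le)

end IsCompactOperator

theorem ContinuousLinearMap.exists_finiteDimensional_orthogonal_le_comap {F : Type*}
    [NormedAddCommGroup F] [InnerProductSpace 𝕜 F] [CompleteSpace E] (S : E →L[𝕜] F)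
    (W : Submodule 𝕜 F) [FiniteDimensional 𝕜 W] :
    ∃ V : Submodule 𝕜 E, FiniteDimensional 𝕜 V ∧ Vᗮ ≤ Wᗮ.comap S.toLinearMap := by
  -- `S†`, built from the Riesz representation on `E` alone, so that `F` need not be complete
  let adj : F →ₗ[𝕜] E :=
    (InnerProductSpace.toDual 𝕜 E).symm.toLinearEquiv.toLinearMap.comp S.toSesqForm.toLinearMap
  refine ⟨W.map adj, inferInstance, fun x hx => ?_⟩
  simpa [adj, Submodule.mem_orthogonal, InnerProductSpace.toDual_symm_apply] using hx

end InnerProductSpace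

theorem statement3_general {X H : Type*} [NormedAddCommGroup X] [InnerProductSpace ℂ X]
    [CompleteSpace X] [NormedAddCommGroup H] [InnerProductSpace ℂ H]
    (T : H →L[ℂ] H) (hTcomp : IsCompactOperator T)
    (S : X →L[ℂ] H) :
    ∃ V : Submodule ℂ X, FiniteDimensional ℂ V ∧
      ∀ g ∈ Vᗮ, 0 ≤ ‖S g‖ ^ 2 - (⟪T (S g), S g⟫_ℂ).re := by
  obtain ⟨W, hW, hTW⟩ := hTcomp.exists_finiteDimensional_reApplyInnerSelf_le one_pos
  obtain ⟨V, hV, hVW⟩ := S.exists_finiteDimensional_orthogonal_le_comap W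
  exact ⟨V, hV, fun g hg => by
    simpa [T.reApplyInnerSelf_apply] using hTW (S g) (hVW hg)⟩

theorem statement3 {X H : Type*} [NormedAddCommGroup X] [InnerProductSpace ℂ X]
    [CompleteSpace X] [NormedAddCommGroup H] [InnerProductSpace ℂ H] [CompleteSpace H]
    (T : H →L[ℂ] H) (hTcomp : IsCompactOperator T) (hTsa : IsSelfAdjoint T)
    (S : X →L[ℂ] H) :
    ∃ V : Submodule ℂ X, FiniteDimensional ℂ V ∧
      ∀ g ∈ Vᗮ, 0 ≤ ‖S g‖ ^ 2 - (⟪T (S g), S g⟫_ℂ).re :=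
  statement3_general T hTcomp S
end

section
/- Let X, Y and Z be complex Hilbert spaces, and let A : X → Y and B : X → Z be bounded linear operators. Then there exists a constant C > 0 such that ‖Ax‖ ≤ C‖Bx‖ for all x ∈ X if and only if the range of A* is contained in the range of B*. -/
/-!
Forward: for `y : Y` the functional `B x ↦ ⟪y, A x⟫` is well defined and bounded on the range
of `B` by the norm inequality; Hahn–Banach and Riesz turn it into `z` with `B* z = A* y`.
Backward: `B*` is injective on `(ker B*)ᗮ` and has the same range there, so `A* y = B* z` for a
unique `z ∈ (ker B*)ᗮ`; the map `y ↦ z` has closed graph, hence is a bounded `L` with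
`B* L = A*`, and then `A = L* B` gives `‖A x‖ ≤ ‖L*‖ ‖B x‖`.
-/

open ContinuousLinearMap LinearMap InnerProductSpace
open scoped InnerProduct

section HahnBanach

variable {𝕜 E F : Type*} [RCLike 𝕜] [AddCommGroup E] [Module 𝕜 E]
  [SeminormedAddCommGroup F] [NormedSpace 𝕜 F]

theorem LinearMap.exists_strongDual_comp_eq_of_norm_le_mul_norm (B : E →ₗ[𝕜] F) (ψ : E →ₗ[𝕜] 𝕜)
    (C : ℝ) (h : ∀ x, ‖ψ x‖ ≤ C * ‖B x‖) : ∃ g : StrongDual 𝕜 F, ∀ x, g (B x) = ψ x := by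
  obtain ⟨s, hs⟩ := B.rangeRestrict.exists_rightInverse_of_surjective B.range_rangeRestrict
  have hBs (w : range B) : B (s w) = w := congrArg Subtype.val (LinearMap.congr_fun hs w)
  have hψs (x : E) : ψ (s (B.rangeRestrict x)) = ψ x := by
    have hB : B (s (B.rangeRestrict x) - x) = 0 := by simp [hBs]
    have := h (s (B.rangeRestrict x) - x)
    rw [hB, norm_zero, mul_zero, norm_le_zero_iff, map_sub, sub_eq_zero] at this
    exact this
  let φ : StrongDual 𝕜 (range B) := (ψ ∘ₗ s).mkContinuous C fun w => by
    simpa [hBs] using h (s w)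
  obtain ⟨g, hg, -⟩ := exists_extension_norm_eq _ φ
  exact ⟨g, fun x => (hg (B.rangeRestrict x)).trans (hψs x)⟩

end HahnBanach

section ClosedGraph

variable {𝕜 E F G : Type*} [NontriviallyNormedField 𝕜]
  [NormedAddCommGroup E] [NormedSpace 𝕜 E] [CompleteSpace E]
  [NormedAddCommGroup F] [NormedSpace 𝕜 F] [CompleteSpace F]
  [NormedAddCommGroup G] [NormedSpace 𝕜 G]

theorem ContinuousLinearMap.exists_comp_eq_of_range_le_of_injective {T : E →L[𝕜] G}
    (hT : Function.Injective T) {S : F →L[𝕜] G}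
    (h : S.range ≤ T.range) : ∃ L : F →L[𝕜] E, T ∘L L = S := by
  let L : F →ₗ[𝕜] E := (LinearEquiv.ofInjective (T : E →ₗ[𝕜] G) hT).symm ∘ₗ
    (S : F →ₗ[𝕜] G).codRestrict _ fun y => h ⟨y, rfl⟩
  have hTL (y : F) : T (L y) = S y :=
    LinearEquiv.ofInjective_symm_apply (T : E →ₗ[𝕜] G) (h := hT) _
  have hgraph : (L.graph : Set (F × E)) = {p | T p.2 = S p.1} := by
    ext ⟨y, e⟩
    simp only [SetLike.mem_coe, mem_graph_iff, Set.mem_ofPred_eq]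
    exact ⟨fun he => he ▸ hTL y, fun he => hT (by rw [hTL, he])⟩
  refine ⟨⟨L, L.continuous_of_isClosed_graph ?_⟩, ext hTL⟩
  rw [hgraph]
  exact isClosed_eq (T.continuous.comp continuous_snd) (S.continuous.comp continuous_fst)

end ClosedGraph

section Hilbert

variable {𝕜 E F G : Type*} [RCLike 𝕜]
  [NormedAddCommGroup E] [InnerProductSpace 𝕜 E] [CompleteSpace E]
  [NormedAddCommGroup F] [NormedAddCommGroup G]

theorem ContinuousLinearMap.range_comp_subtypeL_orthogonal_ker [NormedSpace 𝕜 G]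
    (T : E →L[𝕜] G) : (T ∘L T.kerᗮ.subtypeL).range = T.range := by
  refine le_antisymm (LinearMap.range_comp_le_range _ _) ?_
  rintro _ ⟨e, rfl⟩
  refine ⟨T.kerᗮ.orthogonalProjectionOnto e, ?_⟩
  have h := T.kerᗮ.sub_starProjection_mem_orthogonal e
  rw [Submodule.orthogonal_orthogonal, LinearMap.mem_ker, map_sub, sub_eq_zero] at h
  exact h.symm

theorem ContinuousLinearMap.exists_comp_eq_of_range_le [NormedSpace 𝕜 F] [CompleteSpace F]
    [NormedSpace 𝕜 G] {T : E →L[𝕜] G} {S : F →L[𝕜] G} (h : S.range ≤ T.range) :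
    ∃ L : F →L[𝕜] E, T ∘L L = S := by
  have hT₀ : Function.Injective (T ∘L T.kerᗮ.subtypeL) := by
    refine (injective_iff_map_eq_zero _).2 fun u hu => ?_
    exact Subtype.ext <| Submodule.disjoint_def.1 T.ker.orthogonal_disjoint u hu u.2
  obtain ⟨L₀, hL₀⟩ := exists_comp_eq_of_range_le_of_injective hT₀
    (h.trans (range_comp_subtypeL_orthogonal_ker T).ge)
  exact ⟨T.kerᗮ.subtypeL ∘L L₀, by rw [← hL₀, comp_assoc]⟩

variable [InnerProductSpace 𝕜 F] [CompleteSpace F] [InnerProductSpace 𝕜 G] [CompleteSpace G]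

theorem ContinuousLinearMap.range_adjoint_le_of_norm_le_mul_norm (A : E →L[𝕜] G) (B : E →L[𝕜] F)
    (C : ℝ) (h : ∀ x, ‖A x‖ ≤ C * ‖B x‖) : A†.range ≤ B†.range := by
  rintro _ ⟨y, rfl⟩
  obtain ⟨g, hg⟩ := (B : E →ₗ[𝕜] F).exists_strongDual_comp_eq_of_norm_le_mul_norm
    (innerSL 𝕜 y ∘L A : E →ₗ[𝕜] 𝕜) (‖y‖ * C) fun x => calc
      ‖⟪y, A x⟫_𝕜‖ ≤ ‖y‖ * ‖A x‖ := norm_inner_le_norm y (A x)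
      _ ≤ ‖y‖ * C * ‖B x‖ := by rw [mul_assoc]; gcongr; exact h x
  refine ⟨(InnerProductSpace.toDual 𝕜 F).symm g, ext_inner_right 𝕜 fun x => ?_⟩
  simpa [adjoint_inner_left] using hg x

theorem ContinuousLinearMap.exists_norm_le_mul_norm_of_range_adjoint_le (A : E →L[𝕜] G)
    (B : E →L[𝕜] F) (h : A†.range ≤ B†.range) : ∃ C, 0 < C ∧ ∀ x, ‖A x‖ ≤ C * ‖B x‖ := by
  obtain ⟨L, hL⟩ := exists_comp_eq_of_range_le h
  have hA : A = L† ∘L B := by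
    rw [← adjoint_adjoint A, ← hL, adjoint_comp, adjoint_adjoint]
  refine ⟨‖L†‖ + 1, by positivity, fun x => ?_⟩
  calc ‖A x‖ = ‖(L†) (B x)‖ := by rw [hA]; rfl
    _ ≤ ‖L†‖ * ‖B x‖ := L†.le_opNorm (B x)
    _ ≤ (‖L†‖ + 1) * ‖B x‖ := by gcongr; linarith

end Hilbert

theorem statement4 {X Y Z : Type*}
    [NormedAddCommGroup X] [InnerProductSpace ℂ X] [CompleteSpace X]
    [NormedAddCommGroup Y] [InnerProductSpace ℂ Y] [CompleteSpace Y]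
    [NormedAddCommGroup Z] [InnerProductSpace ℂ Z] [CompleteSpace Z]
    (A : X →L[ℂ] Y) (B : X →L[ℂ] Z) :
    (∃ C : ℝ, 0 < C ∧ ∀ x : X, ‖A x‖ ≤ C * ‖B x‖) ↔
      LinearMap.range (ContinuousLinearMap.adjoint A : Y →ₗ[ℂ] X) ≤
        LinearMap.range (ContinuousLinearMap.adjoint B : Z →ₗ[ℂ] X) :=
  ⟨fun ⟨C, _, h⟩ => A.range_adjoint_le_of_norm_le_mul_norm B C h,
    A.exists_norm_le_mul_norm_of_range_adjoint_le B⟩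
end

section
/- Let X, Y and Z be complex Hilbert spaces, let A : X → Y and B : X → Z be bounded linear operators, and let V ⊆ X be a finite-dimensional subspace. If the range of A* is not contained in (range of B*) + V, then there exists a sequence (g_m)_{m∈ℕ} in the orthogonal complement V⊥ of V such that ‖A g_m‖ → ∞ and ‖B g_m‖ → 0 as m → ∞. -/
/-!
Write the vector outside `range B* + V` as `A* y`. Were `|⟪A* y, w⟫| ≤ c ‖B w‖` for all `w ∈ Vᗮ`,
the functional `B w ↦ ⟪A* y, w⟫` would extend by Hahn–Banach and be represented by Riesz as
`⟪z, ·⟫`, so `A* y - B* z ∈ Vᗮᗮ = V`. Hence the ratio `|⟪A* y, w⟫| / ‖B w‖` is unbounded on `Vᗮ`,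
and rescaling gives `w` with `‖B w‖ → 0` while `‖y‖ ‖A w‖ ≥ |⟪A* y, w⟫| → ∞`.
-/

open Filter Topology LinearMap

namespace LinearMap

variable {R M M₂ M₃ : Type*} [Ring R] [AddCommGroup M] [AddCommGroup M₂] [AddCommGroup M₃]
  [Module R M] [Module R M₂] [Module R M₃]

theorem exists_comp_rangeRestrict_eq_of_ker_le {f : M →ₗ[R] M₂} {g : M →ₗ[R] M₃}
    (h : ker f ≤ ker g) : ∃ ψ : range f →ₗ[R] M₃, ψ ∘ₗ f.rangeRestrict = g :=
  ⟨(ker f).liftQ g h ∘ₗ f.quotKerEquivRange.symm, by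
    ext x
    simp [show f.rangeRestrict x = ⟨f x, mem_range_self f x⟩ from rfl,
      f.quotKerEquivRange_symm_apply_image]⟩

end LinearMap

section

variable {𝕜 E F : Type*} [RCLike 𝕜] [AddCommGroup E] [Module 𝕜 E]

theorem exists_eq_inner_of_norm_le_mul_norm [NormedAddCommGroup F] [InnerProductSpace 𝕜 F]
    [CompleteSpace F] {T : E →ₗ[𝕜] F} {φ : E →ₗ[𝕜] 𝕜} {c : ℝ}
    (hφ : ∀ x, ‖φ x‖ ≤ c * ‖T x‖) : ∃ z : F, ∀ x, φ x = inner 𝕜 z (T x) := by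
  obtain ⟨ψ, hψ⟩ := exists_comp_rangeRestrict_eq_of_ker_le (f := T) (g := φ) fun x hx => by
    simpa [mem_ker.mp hx] using hφ x
  have hψ_le : ∀ y : range T, ‖ψ y‖ ≤ max c 0 * ‖y‖ := by
    rintro ⟨_, x, rfl⟩
    calc ‖ψ (T.rangeRestrict x)‖ = ‖φ x‖ := by rw [← hψ, comp_apply]
      _ ≤ c * ‖T x‖ := hφ x
      _ ≤ max c 0 * ‖T x‖ := by gcongr; exact le_max_left c 0
  obtain ⟨Ψ, hΨ, -⟩ := exists_extension_norm_eq (range T) (ψ.mkContinuous _ hψ_le)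
  refine ⟨(InnerProductSpace.toDual 𝕜 F).symm Ψ, fun x => ?_⟩
  rw [InnerProductSpace.toDual_symm_apply, ← hψ]
  exact (hΨ (T.rangeRestrict x)).symm

theorem exists_seq_tendsto_norm_of_forall_lt_norm [SeminormedAddCommGroup F] [NormedSpace 𝕜 F]
    {φ : E →ₗ[𝕜] 𝕜} {T : E →ₗ[𝕜] F} (h : ∀ c : ℝ, ∃ x, c * ‖T x‖ < ‖φ x‖) :
    ∃ g : ℕ → E, Tendsto (fun m => ‖φ (g m)‖) atTop atTop ∧
      Tendsto (fun m => ‖T (g m)‖) atTop (𝓝 0) := by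
  choose x hx using fun m : ℕ => h ((m + 1) ^ 2)
  have hφx : ∀ m, φ (x m) ≠ 0 := fun m hm => by
    have := hx m
    rw [hm, norm_zero] at this
    exact this.not_ge (by positivity)
  have hnorm : ∀ m : ℕ, ‖(m + 1 : 𝕜)‖ = m + 1 := fun m => by
    exact_mod_cast RCLike.norm_natCast (K := 𝕜) (m + 1)
  refine ⟨fun m => ((m + 1 : 𝕜) / φ (x m)) • x m, ?_, ?_⟩
  · have : ∀ m : ℕ, ‖φ (((m + 1 : 𝕜) / φ (x m)) • x m)‖ = m + 1 := fun m => by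
      rw [map_smul, smul_eq_mul, div_mul_cancel₀ _ (hφx m), hnorm]
    simp only [this]
    exact tendsto_atTop_add_const_right _ 1 tendsto_natCast_atTop_atTop
  · refine squeeze_zero (fun _ => norm_nonneg _) (fun m => ?_)
      tendsto_one_div_add_atTop_nhds_zero_nat
    have := hx m
    rw [map_smul, norm_smul, norm_div, hnorm, div_mul_eq_mul_div,
      div_le_div_iff₀ (norm_pos_iff.mpr (hφx m)) (by positivity)]
    linarith

theorem Submodule.mem_range_adjoint_sup_of_inner_eq {X Z : Type*}
    [NormedAddCommGroup X] [InnerProductSpace 𝕜 X] [CompleteSpace X]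
    [NormedAddCommGroup Z] [InnerProductSpace 𝕜 Z] [CompleteSpace Z]
    (B : X →L[𝕜] Z) (V : Submodule 𝕜 X) [V.HasOrthogonalProjection] {f : X} {z : Z}
    (h : ∀ w ∈ Vᗮ, inner 𝕜 f w = inner 𝕜 z (B w)) :
    f ∈ range (ContinuousLinearMap.adjoint B : Z →ₗ[𝕜] X) ⊔ V := by
  have hV : f - ContinuousLinearMap.adjoint B z ∈ V := by
    rw [← V.orthogonal_orthogonal, Submodule.mem_orthogonal']
    intro w hw
    rw [inner_sub_left, ContinuousLinearMap.adjoint_inner_left, h w hw, sub_self]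
  simpa using Submodule.add_mem_sup
    (mem_range_self (ContinuousLinearMap.adjoint B : Z →ₗ[𝕜] X) z) hV

end

theorem statement6 {X Y Z : Type*}
    [NormedAddCommGroup X] [InnerProductSpace ℂ X] [CompleteSpace X]
    [NormedAddCommGroup Y] [InnerProductSpace ℂ Y] [CompleteSpace Y]
    [NormedAddCommGroup Z] [InnerProductSpace ℂ Z] [CompleteSpace Z]
    (A : X →L[ℂ] Y) (B : X →L[ℂ] Z) (V : Submodule ℂ X) [FiniteDimensional ℂ V]
    (h : ¬ LinearMap.range (ContinuousLinearMap.adjoint A : Y →ₗ[ℂ] X) ≤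
          LinearMap.range (ContinuousLinearMap.adjoint B : Z →ₗ[ℂ] X) ⊔ V) :
    ∃ g : ℕ → X, (∀ m, g m ∈ Vᗮ) ∧
      Tendsto (fun m => ‖A (g m)‖) atTop atTop ∧
      Tendsto (fun m => ‖B (g m)‖) atTop (nhds 0) := by
  obtain ⟨_, ⟨y, rfl⟩, hy⟩ := SetLike.not_le_iff_exists.mp h
  let φ : Vᗮ →ₗ[ℂ] ℂ := innerₛₗ ℂ (ContinuousLinearMap.adjoint A y) ∘ₗ Vᗮ.subtype
  have hunbounded : ∀ c : ℝ, ∃ w : Vᗮ, c * ‖((B : X →ₗ[ℂ] Z) ∘ₗ Vᗮ.subtype) w‖ < ‖φ w‖ := by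
    by_contra! hbounded
    obtain ⟨c, hc⟩ := hbounded
    obtain ⟨z, hz⟩ := exists_eq_inner_of_norm_le_mul_norm hc
    exact hy (V.mem_range_adjoint_sup_of_inner_eq B fun w hw => hz ⟨w, hw⟩)
  obtain ⟨g, hφg, hBg⟩ := exists_seq_tendsto_norm_of_forall_lt_norm hunbounded
  have hy₀ : 0 < ‖y‖ := norm_pos_iff.mpr fun hy₀ => hy (by simp [hy₀])
  refine ⟨fun m => g m, fun m => (g m).2,
    tendsto_atTop_mono (fun m => ?_) (hφg.atTop_div_const hy₀), hBg⟩
  rw [div_le_iff₀' hy₀]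
  simpa [φ, ContinuousLinearMap.adjoint_inner_left] using norm_inner_le_norm (𝕜 := ℂ) y (A (g m))
end

section
/- Let d ∈ {2,3}, k > 0, and let B ⊆ ℝ^d be a nonempty open set. If g ∈ L²(S^{d-1}) and the Herglotz wave function u^i_g vanishes at every point of B, then g = 0. -/
open MeasureTheory Metric Filter
open scoped RealInnerProductSpace

noncomputable section

/-- The surface measure (Hausdorff measure of dimension `d-1`) on the unit sphere
`S^{d-1} ⊆ ℝ^d`, as a measure on `ℝ^d` supported on the sphere. -/
def sphereMeasure (d : ℕ) : Measure (EuclideanSpace ℝ (Fin d)) :=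
  (μH[(d : ℝ) - 1]).restrict (sphere (0 : EuclideanSpace ℝ (Fin d)) 1)

/-- The Herglotz wave function with density `g`:
`u^i_g(x) = ∫_{S^{d-1}} e^{i k x·θ} g(θ) ds(θ)`. -/
def herglotz (d : ℕ) (k : ℝ) (g : EuclideanSpace ℝ (Fin d) → ℂ)
    (x : EuclideanSpace ℝ (Fin d)) : ℂ :=
  ∫ θ, Complex.exp (Complex.I * k * (⟪x, θ⟫ : ℝ)) * g θ ∂(sphereMeasure d)

/-- The Laplacian of a complex-valued function on `ℝ^d`: the sum of the second partial
derivatives with respect to the standard coordinate directions. -/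
def lap (d : ℕ) (u : EuclideanSpace ℝ (Fin d) → ℂ) (x : EuclideanSpace ℝ (Fin d)) : ℂ :=
  ∑ i : Fin d,
    fderiv ℝ (fun y => fderiv ℝ u y (EuclideanSpace.single i 1)) x (EuclideanSpace.single i 1)

/-!
Differentiating `x ↦ ∫ u θ · exp (i k ⟪x, θ⟫) · g θ` in a direction `v` brings down the factor
`i k ⟪v, θ⟫`. So if the Herglotz function vanishes on the open set `B`, the same integral vanishes
on `B` for every polynomial `u` in the linear functions `θ ↦ ⟪v, θ⟫`, and by Stone–Weierstrass for
every continuous `u` on the sphere. Taking for `u` a continuous function times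
`exp (-i k ⟪x₀, θ⟫)` with `x₀ ∈ B` shows that `g` is orthogonal in `L²` to all continuous
functions, which are dense; hence `g = 0`.

The surface measure is finite because the sphere is covered by the radial projections of the faces
of the cube `[-1, 1]ᵈ`, which are Lipschitz images of `[-1, 1]ᵈ⁻¹`.
-/

open Topology
open scoped InnerProductSpace ENNReal

lemma lipschitzOnWith_inv_norm_smul {F : Type*} [NormedAddCommGroup F] [NormedSpace ℝ F] :
    LipschitzOnWith 2 (fun z : F => ‖z‖⁻¹ • z) {z | 1 ≤ ‖z‖} := by
  refine LipschitzOnWith.of_dist_le_mul fun z (hz : 1 ≤ ‖z‖) w (hw : 1 ≤ ‖w‖) => ?_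
  have hz₀ : 0 < ‖z‖ := by linarith
  have hw₀ : 0 < ‖w‖ := by linarith
  have hsplit : ‖z‖⁻¹ • z - ‖w‖⁻¹ • w = ‖z‖⁻¹ • (z - w) + (‖z‖⁻¹ - ‖w‖⁻¹) • w := by
    rw [smul_sub, sub_smul]; abel
  have hcoef : ‖(‖z‖⁻¹ - ‖w‖⁻¹) • w‖ ≤ ‖z‖⁻¹ * ‖z - w‖ := by
    rw [norm_smul, Real.norm_eq_abs, inv_sub_inv hz₀.ne' hw₀.ne', abs_div, abs_mul,
      abs_of_pos hz₀, abs_of_pos hw₀, div_mul_eq_mul_div, mul_div_mul_right _ _ hw₀.ne',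
      div_eq_inv_mul]
    exact mul_le_mul_of_nonneg_left (abs_norm_sub_norm_le w z |>.trans_eq (norm_sub_rev w z))
      (inv_nonneg.mpr hz₀.le)
  rw [dist_eq_norm, dist_eq_norm, hsplit]
  calc ‖‖z‖⁻¹ • (z - w) + (‖z‖⁻¹ - ‖w‖⁻¹) • w‖
      ≤ ‖z‖⁻¹ * ‖z - w‖ + ‖z‖⁻¹ * ‖z - w‖ := by
        refine (norm_add_le _ _).trans (add_le_add ?_ hcoef)
        rw [norm_smul, norm_inv, norm_norm]
    _ ≤ 2 * ‖z - w‖ := by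
        have : ‖z‖⁻¹ ≤ 1 := inv_le_one_of_one_le₀ hz
        nlinarith [norm_nonneg (z - w)]

def spherePatch {n : ℕ} (i : Fin (n + 1)) (s : ℝ) (y : Fin n → ℝ) :
    EuclideanSpace ℝ (Fin (n + 1)) :=
  let z := WithLp.toLp 2 (Fin.insertNth i s y)
  ‖z‖⁻¹ • z

lemma lipschitzWith_spherePatch {n : ℕ} (i : Fin (n + 1)) {s : ℝ} (hs : |s| = 1) :
    ∃ K, LipschitzWith K (spherePatch i s) := by
  have hins : LipschitzWith 1 (Fin.insertNth (α := fun _ => ℝ) i s) :=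
    LipschitzWith.of_dist_le_mul fun y y' => by simp [Fin.dist_insertNth_insertNth]
  have hlift := (PiLp.lipschitzWith_toLp 2 (fun _ : Fin (n + 1) => ℝ)).comp hins
  refine ⟨_, lipschitzOnWith_univ.mp
    (lipschitzOnWith_inv_norm_smul.comp hlift.lipschitzOnWith fun y _ => ?_)⟩
  simpa [hs] using PiLp.norm_apply_le (WithLp.toLp 2 (Fin.insertNth (α := fun _ => ℝ) i s y)) i

lemma sphere_subset_iUnion_spherePatch (n : ℕ) :
    sphere (0 : EuclideanSpace ℝ (Fin (n + 1))) 1 ⊆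
      ⋃ p ∈ (Set.univ : Set (Fin (n + 1))) ×ˢ ({-1, 1} : Set ℝ),
        spherePatch p.1 p.2 '' Set.Icc (-1) 1 := by
  intro θ hθ
  obtain ⟨i, hi⟩ := Finite.exists_max fun j => |θ j|
  set m := |θ i|
  have hm : 0 < m := by
    by_contra! h
    have : θ = 0 := by
      ext j; simpa using (hi j).trans h
    simp [this] at hθ
  have hθm : ∀ j, |θ j / m| ≤ 1 := fun j => by
    rw [abs_div, abs_of_pos hm]; exact div_le_one_of_le₀ (hi j) hm.le
  have hs : θ i / m = -1 ∨ θ i / m = 1 := by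
    have : |θ i / m| = 1 := by rw [abs_div, abs_of_pos hm, div_self hm.ne']
    rcases abs_eq zero_le_one |>.mp this with h | h <;> simp [h]
  refine Set.mem_biUnion (x := (i, θ i / m)) ⟨Set.mem_univ _, hs⟩
    ⟨fun j => θ (i.succAbove j) / m,
      ⟨fun j => (abs_le.mp (hθm _)).1, fun j => (abs_le.mp (hθm _)).2⟩, ?_⟩
  have hins : Fin.insertNth (α := fun _ => ℝ) i (θ i / m) (fun j => θ (i.succAbove j) / m) =
      fun j => θ j / m := Fin.insertNth_eq_iff.mpr ⟨rfl, rfl⟩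
  have hz : WithLp.toLp 2 (fun j => θ j / m) = m⁻¹ • θ := by ext j; simp [div_eq_inv_mul]
  have hθ1 : ‖θ‖ = 1 := by simpa using hθ
  simp only [spherePatch, hins, hz, norm_smul, hθ1, norm_inv, Real.norm_eq_abs, abs_of_pos hm,
    mul_one, inv_inv, smul_smul, mul_inv_cancel₀ hm.ne', one_smul]

lemma hausdorffMeasure_sphere_lt_top (n : ℕ) :
    μH[n] (sphere (0 : EuclideanSpace ℝ (Fin (n + 1))) 1) < ∞ := by
  refine (measure_mono (sphere_subset_iUnion_spherePatch n)).trans_lt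
    (measure_biUnion_lt_top (Set.finite_univ.prod (Set.toFinite _)) fun p hp => ?_)
  have hs : |p.2| = 1 := by
    have : p.2 = -1 ∨ p.2 = 1 := hp.2
    rcases this with h | h <;> simp [h]
  obtain ⟨K, hK⟩ := lipschitzWith_spherePatch p.1 hs
  refine (hK.hausdorffMeasure_image_le n.cast_nonneg _).trans_lt ?_
  have hvol : μH[n] (Set.Icc (-1 : Fin n → ℝ) 1) < ∞ := by
    have hμH : μH[n] = (volume : Measure (Fin n → ℝ)) := by
      simpa using hausdorffMeasure_pi_real (ι := Fin n)
    rw [hμH]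
    exact isCompact_Icc.measure_lt_top
  exact ENNReal.mul_lt_top (by simp) hvol

instance isFiniteMeasure_sphereMeasure (d : ℕ) : IsFiniteMeasure (sphereMeasure d) := by
  refine ⟨?_⟩
  rw [sphereMeasure, Measure.restrict_apply_univ]
  cases d with
  | zero =>
    rw [show sphere (0 : EuclideanSpace ℝ (Fin 0)) 1 = ∅ from
      Set.eq_empty_of_forall_notMem fun θ hθ => by simp [Subsingleton.elim θ 0] at hθ]
    simp
  | succ n =>
    simpa using hausdorffMeasure_sphere_lt_top n

section PlaneWave

variable {X E : Type*} [TopologicalSpace X] [NormedAddCommGroup E] [InnerProductSpace ℝ E]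

def innerFn (ι : C(X, E)) (v : E) : C(X, ℂ) := ⟨fun p => (⟪v, ι p⟫ : ℂ), by fun_prop⟩

@[simp] lemma innerFn_apply (ι : C(X, E)) (v : E) (p : X) : innerFn ι v p = (⟪v, ι p⟫ : ℂ) := rfl

lemma innerFn_add_smul (ι : C(X, E)) (x v : E) (t : ℝ) :
    innerFn ι (x + t • v) = innerFn ι x + t • innerFn ι v := by
  ext p; simp [inner_add_left, inner_smul_left]

lemma star_innerFn (ι : C(X, E)) (v : E) : star (innerFn ι v) = innerFn ι v := by
  ext p; simp

lemma star_range_innerFn (ι : C(X, E)) : star (Set.range (innerFn ι)) = Set.range (innerFn ι) := by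
  ext a
  rw [Set.mem_star]
  exact ⟨fun ⟨v, hv⟩ => ⟨v, by rw [← star_innerFn, hv, star_star]⟩,
    fun ⟨v, hv⟩ => ⟨v, by rw [hv.symm, star_innerFn]⟩⟩

variable [CompactSpace X]

lemma separatesPoints_adjoin_range_innerFn {ι : C(X, E)} (hι : Function.Injective ι) :
    (StarAlgebra.adjoin ℂ (Set.range (innerFn ι))).SeparatesPoints := by
  intro p q hpq
  refine ⟨_, ⟨innerFn ι (ι p - ι q), StarAlgebra.subset_adjoin ℂ _ ⟨_, rfl⟩, rfl⟩, fun h => ?_⟩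
  apply sub_ne_zero.mpr (hι.ne hpq)
  rw [← inner_self_eq_zero (𝕜 := ℝ), inner_sub_right, sub_eq_zero]
  simpa using h

def planeWave (c : ℂ) (ι : C(X, E)) (x : E) : C(X, ℂ) := NormedSpace.exp (c • innerFn ι x)

lemma planeWave_apply (c : ℂ) (ι : C(X, E)) (x : E) (p : X) :
    planeWave c ι x p = Complex.exp (c * ⟪x, ι p⟫) := by
  rw [planeWave, ← ContinuousMap.evalAlgHom_apply ℂ,
    NormedSpace.map_exp _ (continuous_eval_const p), Complex.exp_eq_exp_ℂ]
  rfl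

lemma planeWave_add_smul (c : ℂ) (ι : C(X, E)) (x v : E) (t : ℝ) :
    planeWave c ι (x + t • v) = planeWave c ι x * NormedSpace.exp (t • (c • innerFn ι v)) := by
  rw [planeWave, planeWave, innerFn_add_smul, smul_add, smul_comm, NormedSpace.exp_add]

variable [MeasurableSpace X] [BorelSpace X] {ν : Measure X} [IsFiniteMeasure ν]

local notation "toL2" => ContinuousMap.toLp 2 ν ℂ

def planeWaveAnnihilator (c : ℂ) (ι : C(X, E)) (U : Set E) (g : Lp ℂ 2 ν) : Set C(X, ℂ) :=
  {u | ∀ x ∈ U, ⟪toL2 (u * planeWave c ι x), g⟫_ℂ = 0}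

variable {c : ℂ} {ι : C(X, E)} {U : Set E} {g : Lp ℂ 2 ν}

lemma isClosed_planeWaveAnnihilator : IsClosed (planeWaveAnnihilator c ι U g) := by
  simp only [planeWaveAnnihilator, Set.ofPred_forall]
  exact isClosed_biInter fun x _ => isClosed_eq
    (((toL2).continuous.comp (continuous_mul_const _)).inner continuous_const) continuous_const

/- Differentiating `t ↦ planeWave c ι (x + t • v)` in the Banach algebra `C(X, ℂ)` avoids
differentiating under the integral sign. -/
lemma innerFn_mul_mem_planeWaveAnnihilator (hc : c ≠ 0) (hU : IsOpen U) {u : C(X, ℂ)}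
    (hu : u ∈ planeWaveAnnihilator c ι U g) (v : E) :
    innerFn ι v * u ∈ planeWaveAnnihilator c ι U g := by
  intro x hx
  set a := c • innerFn ι v
  have hexp : HasDerivAt (fun t : ℝ => NormedSpace.exp (t • a)) a 0 := by
    simpa using hasDerivAt_exp_smul_const (𝕂 := ℝ) a 0
  have hderiv : HasDerivAt (fun t : ℝ => ⟪toL2 (u * planeWave c ι (x + t • v)), g⟫_ℂ)
      ⟪toL2 (u * planeWave c ι x * a), g⟫_ℂ 0 := by
    have := ((toL2).restrictScalars ℝ).hasFDerivAt.comp_hasDerivAt (0 : ℝ)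
      (hexp.const_mul (u * planeWave c ι x))
    simpa [planeWave_add_smul, mul_assoc] using this.inner ℂ (hasDerivAt_const 0 g)
  have hnear : ∀ᶠ t in 𝓝 (0 : ℝ), x + t • v ∈ U := by
    have : Continuous fun t : ℝ => x + t • v := by fun_prop
    exact this.continuousAt.preimage_mem_nhds (by simpa using hU.mem_nhds hx)
  have hzero := hderiv.unique ((hasDerivAt_const (0 : ℝ) (0 : ℂ)).congr_of_eventuallyEq
    (hnear.mono fun t ht => hu _ ht))
  have : u * planeWave c ι x * a = c • (innerFn ι v * u * planeWave c ι x) := by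
    rw [mul_smul_comm]
    congr 1
    ring
  rw [this, map_smul, inner_smul_left] at hzero
  exact (mul_eq_zero.mp hzero).resolve_left (by simpa using hc)

lemma mul_mem_planeWaveAnnihilator_of_mem_adjoin (hc : c ≠ 0) (hU : IsOpen U) {a : C(X, ℂ)}
    (ha : a ∈ StarAlgebra.adjoin ℂ (Set.range (innerFn ι))) {u : C(X, ℂ)}
    (hu : u ∈ planeWaveAnnihilator c ι U g) : a * u ∈ planeWaveAnnihilator c ι U g := by
  rw [← StarSubalgebra.mem_toSubalgebra, StarAlgebra.adjoin_toSubalgebra, star_range_innerFn,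
    Set.union_self] at ha
  induction ha using Algebra.adjoin_induction generalizing u with
  | mem a ha =>
    obtain ⟨v, rfl⟩ := ha
    exact innerFn_mul_mem_planeWaveAnnihilator hc hU hu v
  | algebraMap r =>
    intro x hx
    simp [Algebra.algebraMap_eq_smul_one, inner_smul_left, hu x hx]
  | add a b _ _ ha hb =>
    intro x hx
    simp [add_mul, inner_add_left, ha hu x hx, hb hu x hx]
  | mul a b _ _ ha hb =>
    rw [mul_assoc]
    exact ha (hb hu)

lemma planeWaveAnnihilator_eq_univ [T2Space X] (hι : Function.Injective ι) (hc : c ≠ 0)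
    (hU : IsOpen U) (hg : ∀ x ∈ U, ⟪toL2 (planeWave c ι x), g⟫_ℂ = 0) :
    planeWaveAnnihilator c ι U g = Set.univ := by
  have hone : 1 ∈ planeWaveAnnihilator c ι U g := by simpa [planeWaveAnnihilator] using hg
  have hdense := ContinuousMap.starSubalgebra_topologicalClosure_eq_top_of_separatesPoints _
    (separatesPoints_adjoin_range_innerFn hι)
  have hsub : closure (StarAlgebra.adjoin ℂ (Set.range (innerFn ι)) : Set C(X, ℂ)) ⊆
      planeWaveAnnihilator c ι U g := isClosed_planeWaveAnnihilator.closure_subset_iff.mpr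
    fun a ha => by simpa using mul_mem_planeWaveAnnihilator_of_mem_adjoin hc hU ha hone
  rw [← StarSubalgebra.topologicalClosure_coe, hdense] at hsub
  exact Set.eq_univ_of_univ_subset hsub

theorem eq_zero_of_forall_inner_toLp_planeWave_eq_zero [T2Space X] [ν.WeaklyRegular]
    (hι : Function.Injective ι) (hc : c ≠ 0) (hU : IsOpen U) (hU₀ : U.Nonempty)
    (hg : ∀ x ∈ U, ⟪toL2 (planeWave c ι x), g⟫_ℂ = 0) : g = 0 := by
  obtain ⟨x₀, hx₀⟩ := hU₀
  refine (ContinuousMap.toLp_denseRange ℂ ν ℂ (p := 2) ENNReal.ofNat_ne_top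
    ).eq_zero_of_inner_right ℂ fun w => ?_
  have hinv : NormedSpace.exp (-(c • innerFn ι x₀)) * planeWave c ι x₀ = 1 := by
    rw [planeWave, ← NormedSpace.exp_add, neg_add_cancel, NormedSpace.exp_zero]
  have := planeWaveAnnihilator_eq_univ hι hc hU hg ▸
    Set.mem_univ (w * NormedSpace.exp (-(c • innerFn ι x₀)))
  simpa only [mul_assoc, hinv, mul_one] using this x₀ hx₀

theorem eq_zero_of_forall_integral_cexp_inner_eq_zero [MeasurableSpace E] [BorelSpace E]
    {μ : Measure E} [IsFiniteMeasure μ] {K : Set E} (hK : IsCompact K) (hμK : ∀ᵐ θ ∂μ, θ ∈ K)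
    {c : ℂ} (hc : c ≠ 0) {U : Set E} (hU : IsOpen U) (hU₀ : U.Nonempty) (g : Lp ℂ 2 μ)
    (hg : ∀ x ∈ U, ∫ θ, Complex.exp (c * ⟪x, θ⟫) * g θ ∂μ = 0) : g = 0 := by
  have : CompactSpace K := isCompact_iff_compactSpace.mp hK
  have hKm : MeasurableSet K := hK.isClosed.measurableSet
  have hν : MeasurePreserving ((↑) : K → E) (μ.comap (↑)) μ := by
    simpa [Measure.restrict_eq_self_of_ae_mem hμK] using measurePreserving_subtype_coe (μa := μ) hKm
  set ι : C(K, E) := ⟨(↑), continuous_subtype_val⟩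
  have hg' : Lp.compMeasurePreserving _ hν g = 0 := by
    refine eq_zero_of_forall_inner_toLp_planeWave_eq_zero (ι := ι) Subtype.val_injective
      (c := starRingEnd ℂ c) (by simpa using hc) hU hU₀ fun x hx => ?_
    rw [L2.inner_def, ← hg x hx, ← hν.integral_comp (MeasurableEmbedding.subtype_coe hKm)]
    refine integral_congr_ae ?_
    filter_upwards [ContinuousMap.coeFn_toLp (p := 2) (𝕜 := ℂ) _ (planeWave (starRingEnd ℂ c) ι x),
      Lp.coeFn_compMeasurePreserving g hν] with p h₁ h₂
    rw [RCLike.inner_apply, h₁, h₂, planeWave_apply, ← Complex.exp_conj]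
    simp [ι, mul_comm]
  rw [← norm_eq_zero, ← Lp.norm_compMeasurePreserving g hν, hg', norm_zero]

end PlaneWave

theorem statement8_general (d : ℕ) (k : ℝ) (hk : 0 < k)
    (B : Set (EuclideanSpace ℝ (Fin d))) (hBopen : IsOpen B) (hBne : B.Nonempty)
    (g : Lp ℂ 2 (sphereMeasure d))
    (hvanish : ∀ x ∈ B, herglotz d k g x = 0) :
    g = 0 :=
  eq_zero_of_forall_integral_cexp_inner_eq_zero (μ := sphereMeasure d) (isCompact_sphere 0 1)
    (ae_restrict_mem isClosed_sphere.measurableSet)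
    (mul_ne_zero Complex.I_ne_zero (Complex.ofReal_ne_zero.mpr hk.ne')) hBopen hBne g hvanish

theorem statement8 (d : ℕ) (hd : d = 2 ∨ d = 3) (k : ℝ) (hk : 0 < k)
    (B : Set (EuclideanSpace ℝ (Fin d))) (hBopen : IsOpen B) (hBne : B.Nonempty)
    (g : Lp ℂ 2 (sphereMeasure d))
    (hvanish : ∀ x ∈ B, herglotz d k g x = 0) :
    g = 0 :=
  statement8_general d k hk B hBopen hBne g hvanish
end
end
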